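/- Termination on acyclic graphs: if G is a finite tree (connected and acyclic) and the delay function d satisfies the finite delay property, then flooding terminates, i.e. there exists a round t with M(t,v) = 0 for every v ∈ V, regardless of the adversarial delay strategy. -/
import Mathlib


open scoped Classical

/-- The state of a node in the RDAF protocol: message possession `hasMsg`,
source set `src` and destination set `dst`. -/
structure RDAFState (V : Type*) where
  hasMsg : Prop
  src : Set V
  dst : Set V

namespace RDAF

variable {V : Type*}

/-- Initial configuration: the source has the message and destination set `N(g0)`. -/
noncomputable def init (G : SimpleGraph V) (g0 : V) : V → RDAFState V := fun u =>
  if u = g0 then ⟨True, ∅, G.neighborSet g0⟩ else ⟨False, ∅, ∅⟩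

/-- One round of state evolution: from the states at round `j` to the states at round `j+1`,
under delay function `d` (where `d j v e = true` means transmission from `v` along `e` is
blocked in round `j`). -/
noncomputable def step (G : SimpleGraph V) (d : ℕ → V → Sym2 V → Bool) (j : ℕ)
    (st : V → RDAFState V) : V → RDAFState V := fun u =>
  let s' : Set V :=
    {v | G.Adj v u ∧ (st v).hasMsg ∧ u ∈ (st v).dst ∧ d (j + 1) v s(v, u) = false}
  let t' : Set V :=
    if s'.Nonempty then G.neighborSet u \ s'
    else if (st u).hasMsg then {v | v ∈ (st u).dst ∧ d (j + 1) u s(u, v) = true}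
    else ∅
  ⟨s'.Nonempty ∨ t'.Nonempty, s', t'⟩

/-- The state `S(j, u)` of every node `u` at round `j`. -/
noncomputable def stateAt (G : SimpleGraph V) (g0 : V) (d : ℕ → V → Sym2 V → Bool) :
    ℕ → V → RDAFState V
  | 0 => init G g0
  | j + 1 => step G d j (stateAt G g0 d j)

/-- `M j u`: node `u` possesses the message at round `j`. -/
noncomputable def M (G : SimpleGraph V) (g0 : V) (d : ℕ → V → Sym2 V → Bool) (j : ℕ)
    (u : V) : Prop :=
  (stateAt G g0 d j u).hasMsg

/-- `srcSet j u = s(j, u)`: the source set of node `u` at round `j`. -/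
noncomputable def srcSet (G : SimpleGraph V) (g0 : V) (d : ℕ → V → Sym2 V → Bool) (j : ℕ)
    (u : V) : Set V :=
  (stateAt G g0 d j u).src

/-- `destSet j u = dest(j, u)`: the destination set of node `u` at round `j`. -/
noncomputable def destSet (G : SimpleGraph V) (g0 : V) (d : ℕ → V → Sym2 V → Bool) (j : ℕ)
    (u : V) : Set V :=
  (stateAt G g0 d j u).dst

/-- The transmission set `r(j)`: pairs `(v, {v,w})` such that `v` transmits to `w` in round `j`. -/
noncomputable def trans (G : SimpleGraph V) (g0 : V) (d : ℕ → V → Sym2 V → Bool) :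
    ℕ → Set (V × Sym2 V)
  | 0 => ∅
  | j + 1 =>
    {p | ∃ v w : V, p = (v, s(v, w)) ∧ G.Adj v w ∧ M G g0 d j v ∧
      w ∈ destSet G g0 d j v ∧ d (j + 1) v s(v, w) = false}

/-- The configuration `σ(j) = (S(j, ·), r(j))` at round `j`. -/
noncomputable def config (G : SimpleGraph V) (g0 : V) (d : ℕ → V → Sym2 V → Bool) (j : ℕ) :
    (V → RDAFState V) × Set (V × Sym2 V) :=
  (stateAt G g0 d j, trans G g0 d j)

/-- The finite delay property: every node-edge pair is allowed to transmit infinitely often. -/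
def FiniteDelay (G : SimpleGraph V) (d : ℕ → V → Sym2 V → Bool) : Prop :=
  ∀ v : V, ∀ e ∈ G.edgeSet, v ∈ e → ∀ j : ℕ, ∃ j' ≥ j, d j' v e = false

/-- Flooding has terminated by round `t`: no node has the message at round `t`. -/
def TerminatedBy (G : SimpleGraph V) (g0 : V) (d : ℕ → V → Sym2 V → Bool) (t : ℕ) : Prop :=
  ∀ v : V, ¬ M G g0 d t v

/-- Flooding terminates: it has terminated by some round. -/
def Terminates (G : SimpleGraph V) (g0 : V) (d : ℕ → V → Sym2 V → Bool) : Prop :=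
  ∃ t : ℕ, TerminatedBy G g0 d t

/-- A schedule is periodic infinite with parameters `(c, l)`. -/
def PeriodicInfinite (G : SimpleGraph V) (g0 : V) (d : ℕ → V → Sym2 V → Bool)
    (c l : ℕ) : Prop :=
  1 ≤ l ∧ (∀ j : ℕ, c ≤ j → config G g0 d j = config G g0 d (j + l)) ∧
    ∃ k < l, (trans G g0 d (c + k)).Nonempty

end RDAF

namespace RDAF

open SimpleGraph Walk

variable {V : Type*}

/-! ### Tree structure: the unique path to the source, and parent map -/

/-- The unique path from `u` to `g0` in the tree `G`. -/
noncomputable def pth (G : SimpleGraph V) (hG : G.IsTree) (g0 u : V) : G.Walk u g0 :=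
  (hG.existsUnique_path u g0).choose

lemma pth_isPath (G : SimpleGraph V) (hG : G.IsTree) (g0 u : V) :
    (pth G hG g0 u).IsPath :=
  (hG.existsUnique_path u g0).choose_spec.1

lemma pth_eq (G : SimpleGraph V) (hG : G.IsTree) (g0 : V) {u : V} (q : G.Walk u g0)
    (hq : q.IsPath) : q = pth G hG g0 u :=
  (hG.existsUnique_path u g0).choose_spec.2 q hq

/-- The parent of `u` towards `g0`: the second vertex on the unique path `u → g0`. -/
noncomputable def pr (G : SimpleGraph V) (hG : G.IsTree) (g0 u : V) : V :=
  (pth G hG g0 u).getVert 1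

lemma pr_g0 (G : SimpleGraph V) (hG : G.IsTree) (g0 : V) : pr G hG g0 g0 = g0 := by
  have h : (Walk.nil : G.Walk g0 g0) = pth G hG g0 g0 := pth_eq G hG g0 _ Walk.IsPath.nil
  rw [pr, ← h]
  exact Walk.getVert_of_length_le _ (by simp)

lemma pr_spec (G : SimpleGraph V) (hG : G.IsTree) (g0 : V) {u : V} (hu : u ≠ g0) :
    G.Adj u (pr G hG g0 u) ∧
      (pth G hG g0 (pr G hG g0 u)).length + 1 = (pth G hG g0 u).length := by
  cases hp : pth G hG g0 u with
  | nil => exact absurd rfl hu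
  | @cons _ v _ h q =>
    have hpath : (Walk.cons h q).IsPath := hp ▸ pth_isPath G hG g0 u
    have hq : q.IsPath := hpath.of_cons
    have hqe : q = pth G hG g0 v := pth_eq G hG g0 q hq
    have hpr : pr G hG g0 u = v := by
      rw [pr, hp, Walk.getVert_cons_succ, Walk.getVert_zero]
    rw [hpr]
    exact ⟨h, by rw [← hqe]; simp⟩

/-- In a tree, for any edge `{u, w}`, either `u` is the parent of `w` or vice versa. -/
lemma pr_dichotomy (G : SimpleGraph V) (hG : G.IsTree) (g0 : V) {u w : V}
    (huw : G.Adj u w) : pr G hG g0 w = u ∨ pr G hG g0 u = w := by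
  by_cases hw : w ∈ (pth G hG g0 u).support
  · right
    have hp := pth_isPath G hG g0 u
    have htake : ((pth G hG g0 u).takeUntil w hw).IsPath := hp.takeUntil hw
    have hsingle : (Walk.cons huw Walk.nil : G.Walk u w).IsPath := by
      simp [Walk.cons_isPath_iff, huw.ne]
    have hteq : (pth G hG g0 u).takeUntil w hw = Walk.cons huw Walk.nil :=
      congrArg Subtype.val (hG.IsAcyclic.path_unique ⟨_, htake⟩ ⟨_, hsingle⟩)
    have hspec := (pth G hG g0 u).take_spec hw
    rw [pr, ← hspec, hteq]
    simp [Walk.cons_append, Walk.getVert_cons_succ, Walk.getVert_zero]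
  · left
    have hcons : (Walk.cons huw.symm (pth G hG g0 u)).IsPath :=
      (pth_isPath G hG g0 u).cons hw
    rw [pr, ← pth_eq G hG g0 _ hcons, Walk.getVert_cons_succ, Walk.getVert_zero]

/-! ### Basic unfolding lemmas for the dynamics -/

variable (G : SimpleGraph V) (g0 : V) (d : ℕ → V → Sym2 V → Bool)

lemma srcSet_succ (j : ℕ) (u : V) : srcSet G g0 d (j + 1) u =
    {v | G.Adj v u ∧ M G g0 d j v ∧ u ∈ destSet G g0 d j v ∧ d (j + 1) v s(v, u) = false} :=
  rfl

lemma destSet_succ (j : ℕ) (u : V) : destSet G g0 d (j + 1) u =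
    if (srcSet G g0 d (j + 1) u).Nonempty then G.neighborSet u \ srcSet G g0 d (j + 1) u
    else if M G g0 d j u then {v | v ∈ destSet G g0 d j u ∧ d (j + 1) u s(u, v) = true}
    else ∅ :=
  rfl

lemma M_succ (j : ℕ) (u : V) : M G g0 d (j + 1) u ↔
    (srcSet G g0 d (j + 1) u).Nonempty ∨ (destSet G g0 d (j + 1) u).Nonempty :=
  Iff.rfl

lemma srcSet_zero (u : V) : srcSet G g0 d 0 u = ∅ := by
  by_cases hu : u = g0 <;> simp [srcSet, stateAt, init, hu]

lemma destSet_zero_ne (u : V) (hu : u ≠ g0) : destSet G g0 d 0 u = ∅ := by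
  simp [destSet, stateAt, init, hu]

lemma destSet_zero_g0 : destSet G g0 d 0 g0 = G.neighborSet g0 := by
  simp [destSet, stateAt, init]

/-! ### The parent/child invariant -/

lemma invariant (hG : G.IsTree) (j : ℕ) :
    (∀ u v, v ∈ srcSet G g0 d j u → G.Adj v u ∧ pr G hG g0 u = v) ∧
    (∀ u w, w ∈ destSet G g0 d j u → G.Adj u w ∧ pr G hG g0 w = u) := by
  induction j with
  | zero =>
    constructor
    · intro u v hv
      rw [srcSet_zero] at hv
      exact absurd hv (Set.notMem_empty v)
    · intro u w hw
      by_cases hu : u = g0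
      · subst hu
        rw [destSet_zero_g0] at hw
        have hadj : G.Adj u w := hw
        refine ⟨hadj, ?_⟩
        rcases pr_dichotomy G hG u hadj with h | h
        · exact h
        · exact absurd (h ▸ (pr_g0 G hG u)).symm hadj.ne
      · rw [destSet_zero_ne G g0 d u hu] at hw
        exact absurd hw (Set.notMem_empty w)
  | succ j ih =>
    obtain ⟨ihs, ihd⟩ := ih
    have hsrc : ∀ u v, v ∈ srcSet G g0 d (j + 1) u → G.Adj v u ∧ pr G hG g0 u = v := by
      intro u v hv
      rw [srcSet_succ] at hv
      obtain ⟨hadj, _, hdest, _⟩ := hv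
      exact ⟨hadj, (ihd v u hdest).2⟩
    refine ⟨hsrc, ?_⟩
    intro u w hw
    rw [destSet_succ] at hw
    split_ifs at hw with h1 h2
    · obtain ⟨hwN, hws⟩ := hw
      have hadj : G.Adj u w := hwN
      refine ⟨hadj, ?_⟩
      rcases pr_dichotomy G hG g0 hadj with h | h
      · exact h
      · exfalso
        obtain ⟨v, hv⟩ := h1
        have hvw : v = w := ((hsrc u v hv).2).symm.trans h
        exact hws (hvw ▸ hv)
    · exact ihd u w hw.1
    · exact absurd hw (Set.notMem_empty w)

/-! ### Death of a node once its sources are gone forever -/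

lemma dest_mono {u : V} {j : ℕ} (hsrc : srcSet G g0 d (j + 1) u = ∅) :
    destSet G g0 d (j + 1) u ⊆ destSet G g0 d j u := by
  rw [destSet_succ, hsrc]
  simp only [Set.not_nonempty_empty, if_false]
  split_ifs
  · intro v hv; exact hv.1
  · exact Set.empty_subset _

lemma dest_chain {u : V} {T : ℕ} (hT : ∀ j ≥ T, srcSet G g0 d j u = ∅)
    {a b : ℕ} (hTa : T ≤ a) (hab : a ≤ b) :
    destSet G g0 d b u ⊆ destSet G g0 d a u := by
  induction b with
  | zero =>
    have : a = 0 := Nat.le_zero.mp hab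
    subst this; exact subset_rfl
  | succ b ihb =>
    rcases Nat.lt_or_ge a (b + 1) with h | h
    · have h1 : srcSet G g0 d (b + 1) u = ∅ := hT _ (by omega)
      exact (dest_mono G g0 d h1).trans (ihb (by omega))
    · have : a = b + 1 := le_antisymm hab h
      subst this; exact subset_rfl

lemma dest_dies_aux [Fintype V] (hG : G.IsTree) (hfd : FiniteDelay G d) (u : V) :
    ∀ n T, (∀ j ≥ T, srcSet G g0 d j u = ∅) → (destSet G g0 d T u).ncard ≤ n →
      ∃ T' ≥ T, ∀ j ≥ T', destSet G g0 d j u = ∅ := by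
  intro n
  induction n with
  | zero =>
    intro T hT hcard
    have hemp : destSet G g0 d T u = ∅ :=
      (Set.ncard_eq_zero (Set.toFinite _)).mp (Nat.le_zero.mp hcard)
    refine ⟨T, le_refl T, fun j hj => ?_⟩
    have := dest_chain G g0 d hT (le_refl T) hj
    rw [hemp] at this
    exact Set.subset_empty_iff.mp this
  | succ n IH =>
    intro T hT hcard
    by_cases hemp : destSet G g0 d T u = ∅
    · refine ⟨T, le_refl T, fun j hj => ?_⟩
      have := dest_chain G g0 d hT (le_refl T) hj
      rw [hemp] at this
      exact Set.subset_empty_iff.mp this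
    · obtain ⟨w, hw⟩ := Set.nonempty_iff_ne_empty.mpr hemp
      have hadj : G.Adj u w := ((invariant G g0 d hG T).2 u w hw).1
      obtain ⟨j', hj', hd⟩ := hfd u s(u, w) (G.mem_edgeSet.mpr hadj)
        (Sym2.mem_mk_left u w) (T + 1)
      obtain ⟨k, rfl⟩ : ∃ k, j' = k + 1 := ⟨j' - 1, by omega⟩
      have hwj : w ∉ destSet G g0 d (k + 1) u := by
        rw [destSet_succ, hT (k + 1) (by omega)]
        simp only [Set.not_nonempty_empty, if_false]
        split_ifs
        · rintro ⟨-, hdt⟩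
          rw [hd] at hdt
          exact absurd hdt (by simp)
        · exact Set.notMem_empty w
      have hsub : destSet G g0 d (k + 1) u ⊆ destSet G g0 d T u \ {w} := by
        intro v hv
        refine ⟨dest_chain G g0 d hT (le_refl T) (by omega) hv, ?_⟩
        intro hvw
        rw [Set.mem_singleton_iff] at hvw
        exact hwj (hvw ▸ hv)
      have hlt : (destSet G g0 d (k + 1) u).ncard ≤ n := by
        have h1 : (destSet G g0 d (k + 1) u).ncard ≤ (destSet G g0 d T u \ {w}).ncard :=
          Set.ncard_le_ncard hsub (Set.toFinite _)
        have h2 : (destSet G g0 d T u \ {w}).ncard + 1 = (destSet G g0 d T u).ncard :=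
          Set.ncard_diff_singleton_add_one hw (Set.toFinite _)
        omega
      obtain ⟨T', hT'1, hT'2⟩ := IH (k + 1) (fun j hj => hT j (by omega)) hlt
      exact ⟨T', by omega, hT'2⟩

lemma node_dies [Fintype V] (hG : G.IsTree) (hfd : FiniteDelay G d) (u : V) (T : ℕ)
    (hT : ∀ j ≥ T, srcSet G g0 d j u = ∅) :
    ∃ T', ∀ j ≥ T', ¬ M G g0 d j u := by
  obtain ⟨T', hT'1, hT'2⟩ :=
    dest_dies_aux G g0 d hG hfd u (destSet G g0 d T u).ncard T hT (le_refl _)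
  refine ⟨T' + 1, fun j hj => ?_⟩
  obtain ⟨k, rfl⟩ : ∃ k, j = k + 1 := ⟨j - 1, by omega⟩
  rw [M_succ]
  rintro (h | h)
  · rw [hT (k + 1) (by omega)] at h
    exact Set.not_nonempty_empty h
  · rw [hT'2 (k + 1) (by omega)] at h
    exact Set.not_nonempty_empty h

lemma all_die [Fintype V] (hG : G.IsTree) (hfd : FiniteDelay G d) (u : V) :
    ∃ T, ∀ j ≥ T, ¬ M G g0 d j u := by
  suffices h : ∀ n u, (pth G hG g0 u).length = n → ∃ T, ∀ j ≥ T, ¬ M G g0 d j u from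
    h _ u rfl
  intro n
  induction n using Nat.strong_induction_on with
  | _ n IHn =>
    intro u hn
    by_cases hu : u = g0
    · subst hu
      refine node_dies G u d hG hfd u 0 (fun j _ => ?_)
      ext v
      simp only [Set.mem_empty_iff_false, iff_false]
      intro hv
      obtain ⟨hadj, hpr⟩ := (invariant G u d hG j).1 u v hv
      rw [pr_g0] at hpr
      exact hadj.ne hpr.symm
    · obtain ⟨hadj, hlen⟩ := pr_spec G hG g0 hu
      obtain ⟨Tp, hTp⟩ := IHn (pth G hG g0 (pr G hG g0 u)).length (by omega) _ rfl
      refine node_dies G g0 d hG hfd u (Tp + 1) (fun j hj => ?_)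
      obtain ⟨k, rfl⟩ : ∃ k, j = k + 1 := ⟨j - 1, by omega⟩
      ext v
      simp only [Set.mem_empty_iff_false, iff_false]
      intro hv
      have hprv : pr G hG g0 u = v := ((invariant G g0 d hG (k + 1)).1 u v hv).2
      rw [srcSet_succ] at hv
      obtain ⟨-, hM, -, -⟩ := hv
      exact hTp k (by omega) (hprv ▸ hM)

end RDAF

/-- **Termination on acyclic graphs.** If `G` is a finite tree (connected and acyclic) and the
delay function `d` satisfies the finite delay property, then flooding terminates, regardless of
the adversarial delay strategy. -/
theorem RDAF.tree_terminates
    {V : Type*} [Fintype V] (G : SimpleGraph V) (hG : G.IsTree)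
    (g0 : V) (d : ℕ → V → Sym2 V → Bool) (hfd : RDAF.FiniteDelay G d) :
    RDAF.Terminates G g0 d := by
  choose T hT using RDAF.all_die G g0 d hG hfd
  refine ⟨Finset.univ.sup T, fun v => ?_⟩
  exact hT v _ (Finset.le_sup (Finset.mem_univ v))
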